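/- If X is connected, locally path connected, and a strong H-SLT space at x₀ for some subgroup H of π₁(X,x₀), and K is an open subgroup of the quasitopological fundamental group π₁^{qtop}(X,x₀) containing H, then there exists an open cover 𝒰 of X whose Spanier group π(𝒰,x₀) is contained in K. -/

import Mathlib

open CategoryTheory unitInterval
open scoped Topology

attribute [local instance] Path.Homotopic.setoid

noncomputable section

/-- The homotopy class of a loop as an element of the fundamental group. -/
def loopClass {X : Type*} [TopologicalSpace X] {x : X} (γ : Path x x) :
    FundamentalGroup X x :=
  (⟦γ⟧ : Path.Homotopic.Quotient x x)

variable {X : Type*} [TopologicalSpace X]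

/-- The Spanier group of a family of subsets of `X`, based at `x`: the subgroup generated by
classes `[α∗β∗α⁻¹]` where `α` is a path from `x` and `β` is a loop inside a member of `𝒰`. -/
def spanierGroupAt (x : X) (𝒰 : Set (Set X)) : Subgroup (FundamentalGroup X x) :=
  Subgroup.closure {g | ∃ (y : X) (α : Path x y) (β : Path y y) (U : Set X),
    U ∈ 𝒰 ∧ (∀ t, β t ∈ U) ∧ g = loopClass (α.trans (β.trans α.symm))}

/-- `𝒰` is an open cover of `X`. -/
def IsOpenCover (𝒰 : Set (Set X)) : Prop := (∀ U ∈ 𝒰, IsOpen U) ∧ ⋃₀ 𝒰 = Set.univ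

/-- `X` is a strong `H`-SLT space at `x₀`: for every `x ∈ X` and every open neighborhood `U`
of `x₀` there is an open neighborhood `V` of `x` such that for every loop `β` in `V` based at
`x` and every path `α` from `x₀` to `x` there is a loop `λ` in `U` based at `x₀` with
`[α∗β∗α⁻¹∗λ⁻¹] ∈ H`. -/
def StrongHSLTAt (x₀ : X) (H : Subgroup (FundamentalGroup X x₀)) : Prop :=
  ∀ (x : X) (U : Set X), IsOpen U → x₀ ∈ U →
    ∃ V : Set X, IsOpen V ∧ x ∈ V ∧
      ∀ (β : Path x x), (∀ t, β t ∈ V) → ∀ (α : Path x₀ x),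
        ∃ lam : Path x₀ x₀, (∀ t, lam t ∈ U) ∧
          loopClass (α.trans (β.trans α.symm)) * (loopClass lam)⁻¹ ∈ H

/-- The quotient topology on the fundamental group induced by the compact-open topology on
the loop space, i.e. the topology of the quasitopological fundamental group `π₁^qtop`. -/
def qtop (x₀ : X) : TopologicalSpace (FundamentalGroup X x₀) :=
  TopologicalSpace.coinduced (fun γ : Path x₀ x₀ => loopClass γ) inferInstance

/-!
The preimage of `K` in the loop space is an open neighbourhood of the constant loop, so it
contains the classes of all loops lying in some open `U ∋ x₀`. The strong `H`-SLT property for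
this `U` gives for each `x` an open `V x` such that every `[α β α⁻¹]` with `β` a loop at `x` in
`V x` differs from such a class by an element of `H ≤ K`, hence lies in `K`. A loop in the path
component of `x` in `V x` reduces to this case by conjugating along a path inside `V x`, and
local path connectedness makes these path components an open cover.
-/

theorem ContinuousMap.exists_isOpen_forall_mem_of_mem_nhds_const {Y Z : Type*}
    [TopologicalSpace Y] [TopologicalSpace Z] {z : Z} {W : Set C(Y, Z)}
    (hW : W ∈ 𝓝 (ContinuousMap.const Y z)) :
    ∃ U : Set Z, IsOpen U ∧ z ∈ U ∧ ∀ f : C(Y, Z), (∀ y, f y ∈ U) → f ∈ W := by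
  obtain ⟨⟨K, U⟩, ⟨-, hzU, hU⟩, hKUW⟩ :=
    ((nhds_basis_opens z).nhds_continuousMapConst (X := Y)).mem_iff.mp hW
  exact ⟨U, hU, hzU, fun f hf => hKUW fun y _ => hf y⟩

theorem Path.exists_isOpen_forall_mem_of_mem_nhds_refl {x : X} {W : Set (Path x x)}
    (hW : W ∈ 𝓝 (Path.refl x)) :
    ∃ U : Set X, IsOpen U ∧ x ∈ U ∧ ∀ γ : Path x x, (∀ t, γ t ∈ U) → γ ∈ W := by
  rw [nhds_induced] at hW
  obtain ⟨W', hW', hW'W⟩ := hW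
  obtain ⟨U, hU, hxU, hUW'⟩ := ContinuousMap.exists_isOpen_forall_mem_of_mem_nhds_const hW'
  exact ⟨U, hU, hxU, fun γ hγ => hW'W (hUW' γ hγ)⟩

open Set

section

variable {x₀ : X}

theorem exists_isOpen_forall_loopClass_mem {K : Set (FundamentalGroup X x₀)}
    (hK : IsOpen[qtop x₀] K) (hK₁ : 1 ∈ K) :
    ∃ U : Set X, IsOpen U ∧ x₀ ∈ U ∧ ∀ γ : Path x₀ x₀, (∀ t, γ t ∈ U) → loopClass γ ∈ K :=
  Path.exists_isOpen_forall_mem_of_mem_nhds_refl ((isOpen_coinduced.mp hK).mem_nhds hK₁)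

theorem loopClass_trans_conj {x y : X} (α : Path x₀ y) (β : Path y y) (δ : Path x y) :
    loopClass ((α.trans δ.symm).trans ((δ.trans (β.trans δ.symm)).trans (α.trans δ.symm).symm))
      = loopClass (α.trans (β.trans α.symm)) := by
  simp only [loopClass, Path.trans_symm, Path.symm_symm]
  change Path.Homotopic.Quotient.mk _ = Path.Homotopic.Quotient.mk _
  open Path.Homotopic.Quotient in
  simp only [mk_trans, mk_symm, trans_assoc, ← trans_assoc (symm _) (mk δ), symm_trans,
    refl_trans]

variable {S : Set (FundamentalGroup X x₀)} {U V : Set X} {x : X}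

theorem loopClass_conj_mem_of_mul_inv_mem {H K : Subgroup (FundamentalGroup X x₀)}
    (hHK : H ≤ K) (hUK : ∀ γ : Path x₀ x₀, (∀ t, γ t ∈ U) → loopClass γ ∈ K)
    {β : Path x x} {α : Path x₀ x} {lam : Path x₀ x₀} (hlam : ∀ t, lam t ∈ U)
    (hH : loopClass (α.trans (β.trans α.symm)) * (loopClass lam)⁻¹ ∈ H) :
    loopClass (α.trans (β.trans α.symm)) ∈ K := by
  simpa only [inv_mul_cancel_right] using K.mul_mem (hHK hH) (hUK lam hlam)

theorem loopClass_conj_mem_of_mem_pathComponentIn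
    (hV : ∀ β : Path x x, (∀ t, β t ∈ V) → ∀ α : Path x₀ x,
      loopClass (α.trans (β.trans α.symm)) ∈ S)
    {y : X} (α : Path x₀ y) (β : Path y y) (hβ : ∀ t, β t ∈ pathComponentIn V x) :
    loopClass (α.trans (β.trans α.symm)) ∈ S := by
  obtain ⟨δ, hδ⟩ : JoinedIn V x y := β.source ▸ hβ 0
  have hβV : ∀ t, β t ∈ V := fun t => pathComponentIn_subset (hβ t)
  have hconj : ∀ t, δ.trans (β.trans δ.symm) t ∈ V := by
    simp only [← range_subset_iff, Path.trans_range, Path.symm_range, union_subset_iff]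
      at hδ hβV ⊢
    exact ⟨hδ, hβV, hδ⟩
  rw [← loopClass_trans_conj α β δ]
  exact hV _ hconj _

theorem isOpenCover_range_pathComponentIn [LocallyPathConnectedSpace X] {V : X → Set X}
    (hV : ∀ x, IsOpen (V x)) (hxV : ∀ x, x ∈ V x) :
    IsOpenCover (range fun x => pathComponentIn (V x) x) :=
  ⟨forall_mem_range.mpr fun x => (hV x).pathComponentIn x,
    eq_univ_of_forall fun x => mem_sUnion_of_mem (mem_pathComponentIn_self (hxV x)) ⟨x, rfl⟩⟩

theorem strong_HSLT_exists_spanier_subgroup_general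
    {X : Type*} [TopologicalSpace X] [LocallyPathConnectedSpace X]
    (x₀ : X) (H K : Subgroup (FundamentalGroup X x₀))
    (hX : StrongHSLTAt x₀ H) (hHK : H ≤ K)
    (hK : IsOpen[qtop x₀] (K : Set (FundamentalGroup X x₀))) :
    ∃ 𝒰 : Set (Set X), IsOpenCover 𝒰 ∧ spanierGroupAt x₀ 𝒰 ≤ K := by
  obtain ⟨U, hU, hx₀U, hUK⟩ := exists_isOpen_forall_loopClass_mem hK K.one_mem
  choose V hV hxV hVH using fun x => hX x U hU hx₀U
  refine ⟨range fun x => pathComponentIn (V x) x, isOpenCover_range_pathComponentIn hV hxV, ?_⟩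
  rw [spanierGroupAt, Subgroup.closure_le]
  rintro _ ⟨y, α, β, _, ⟨x, rfl⟩, hβ, rfl⟩
  refine loopClass_conj_mem_of_mem_pathComponentIn (fun β hβ α => ?_) α β hβ
  obtain ⟨lam, hlam, hH⟩ := hVH x β hβ α
  exact loopClass_conj_mem_of_mul_inv_mem hHK hUK hlam hH

theorem strong_HSLT_exists_spanier_subgroup
    {X : Type*} [TopologicalSpace X] [ConnectedSpace X] [LocallyPathConnectedSpace X]
    (x₀ : X) (H K : Subgroup (FundamentalGroup X x₀))
    (hX : StrongHSLTAt x₀ H) (hHK : H ≤ K)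
    (hK : IsOpen[qtop x₀] (K : Set (FundamentalGroup X x₀))) :
    ∃ 𝒰 : Set (Set X), IsOpenCover 𝒰 ∧ spanierGroupAt x₀ 𝒰 ≤ K :=
  strong_HSLT_exists_spanier_subgroup_general x₀ H K hX hHK hK

end
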